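/- Let Q be the A₂ quiver 1 ← 2. Then in the completed quantum algebra Â_Q the pentagon identity holds: E(y_{e₁})·E(y_{e₂}) = E(y_{e₂})·E(y_{e₁+e₂})·E(y_{e₁}). -/

import Mathlib

open scoped BigOperators

/-- A quiver on vertex set `Fin n` with `m` arrows, each arrow `a` having a
tail `ta a` and a head `ha a`. -/
structure Quiv (n : ℕ) where
  m : ℕ
  ta : Fin m → Fin n
  ha : Fin m → Fin n

namespace Quiv

variable {n : ℕ}

/-- Coerce a dimension vector in `ℕⁿ` to `ℤⁿ`. -/
def toZ {n : ℕ} (γ : Fin n → ℕ) : Fin n → ℤ := fun i => (γ i : ℤ)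

/-- The Euler form of the subquiver with vertex set `V` and arrow set `A`. -/
def chiSub (Q : Quiv n) (V : Finset (Fin n)) (A : Finset (Fin Q.m))
    (γ₁ γ₂ : Fin n → ℤ) : ℤ :=
  (∑ i ∈ V, γ₁ i * γ₂ i) - ∑ a ∈ A, γ₁ (Q.ta a) * γ₂ (Q.ha a)

/-- The Euler form `χ` of `Q`. -/
def chi (Q : Quiv n) (γ₁ γ₂ : Fin n → ℤ) : ℤ :=
  Q.chiSub Finset.univ Finset.univ γ₁ γ₂

/-- `λ(γ₁,γ₂) = χ(γ₂,γ₁) − χ(γ₁,γ₂)`, the antisymmetrized Euler form. -/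
def lam (Q : Quiv n) (γ₁ γ₂ : Fin n → ℤ) : ℤ := Q.chi γ₂ γ₁ - Q.chi γ₁ γ₂

/-- `λ_A`, the restriction of `λ` to a subset `A` of the arrows. -/
def lamA (Q : Quiv n) (A : Finset (Fin Q.m)) (γ₁ γ₂ : Fin n → ℤ) : ℤ :=
  ∑ a ∈ A, (γ₁ (Q.ta a) * γ₂ (Q.ha a) - γ₂ (Q.ta a) * γ₁ (Q.ha a))

/-- No directed cycle using only arrows from `A`. -/
def AcyclicOn (Q : Quiv n) (A : Finset (Fin Q.m)) : Prop :=
  ¬ ∃ (k : ℕ) (c : ZMod (k + 1) → Fin Q.m),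
      (∀ i, c i ∈ A) ∧ ∀ i, Q.ha (c i) = Q.ta (c (i + 1))

/-- The quiver `Q` is acyclic: it has no directed cycle. -/
def Acyclic (Q : Quiv n) : Prop := Q.AcyclicOn Finset.univ

/-- Undirected adjacency via an arrow from `A`. -/
def AdjOn (Q : Quiv n) (A : Finset (Fin Q.m)) (x y : Fin n) : Prop :=
  ∃ a ∈ A, (Q.ta a = x ∧ Q.ha a = y) ∨ (Q.ta a = y ∧ Q.ha a = x)

/-- The subquiver `(V, A)` is connected as an undirected graph. -/
def ConnectedOn (Q : Quiv n) (V : Finset (Fin n)) (A : Finset (Fin Q.m)) : Prop :=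
  ∀ x ∈ V, ∀ y ∈ V, Relation.ReflTransGen (Q.AdjOn A) x y

/-- The Tits form of the subquiver `(V,A)` is positive definite. -/
def PosDefOn (Q : Quiv n) (V : Finset (Fin n)) (A : Finset (Fin Q.m)) : Prop :=
  ∀ γ : Fin n → ℤ, (∀ i, i ∉ V → γ i = 0) → γ ≠ 0 → 0 < Q.chiSub V A γ γ

/-- The subquiver `(V,A)` is a (nonempty, connected, acyclic, positive-definite
Tits form) Dynkin quiver. -/
def DynkinOn (Q : Quiv n) (V : Finset (Fin n)) (A : Finset (Fin Q.m)) : Prop :=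
  V.Nonempty ∧ (∀ a ∈ A, Q.ta a ∈ V ∧ Q.ha a ∈ V) ∧
    Q.ConnectedOn V A ∧ Q.AcyclicOn A ∧ Q.PosDefOn V A

/-- The set of positive roots of the subquiver `(V,A)`: nonzero dimension
vectors supported on `V` with `χ(β,β) = 1`. -/
def PosRootsOn (Q : Quiv n) (V : Finset (Fin n)) (A : Finset (Fin Q.m)) :
    Set (Fin n → ℕ) :=
  {β | β ≠ 0 ∧ (∀ i, i ∉ V → β i = 0) ∧ Q.chiSub V A (toZ β) (toZ β) = 1}

/-- A Dynkin subquiver partition `Q• = {Q¹,…,Q^ℓ}` of `Q`: each block is a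
subquiver `(V j, A j)`, the vertex sets partition `Q₀`, and each block is a
nonempty connected Dynkin quiver. -/
structure DSP (Q : Quiv n) (ℓ : ℕ) where
  V : Fin ℓ → Finset (Fin n)
  A : Fin ℓ → Finset (Fin Q.m)
  cover : ∀ i : Fin n, ∃! j, i ∈ V j
  dynkin : ∀ j, Q.DynkinOn (V j) (A j)

/-- Arrows of `Q` not belonging to any block, i.e. arrows of the contracted
quiver `P(Q,Q•)`. -/
def DSP.Cut {Q : Quiv n} {ℓ : ℕ} (P : DSP Q ℓ) (a : Fin Q.m) : Prop :=
  ∀ j, a ∉ P.A j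

/-- `Q•` is admissible: the contracted quiver `P(Q,Q•)` is acyclic, i.e. there
is no cyclic sequence of cut arrows in which the block of the head of each
arrow is the block of the tail of the next one. -/
def DSP.Admissible {Q : Quiv n} {ℓ : ℕ} (P : DSP Q ℓ) : Prop :=
  ¬ ∃ (k : ℕ) (c : ZMod (k + 1) → Fin Q.m),
      (∀ i, P.Cut (c i)) ∧
      ∀ i, ∃ j : Fin ℓ, Q.ha (c i) ∈ P.V j ∧ Q.ta (c (i + 1)) ∈ P.V j

/-- `Q•` is ordered: every cut arrow goes from a higher-indexed block (tail)
to a lower-indexed block (head). -/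
def DSP.Ordered {Q : Quiv n} {ℓ : ℕ} (P : DSP Q ℓ) : Prop :=
  ∀ a : Fin Q.m, P.Cut a →
    ∀ j j' : Fin ℓ, Q.ha a ∈ P.V j → Q.ta a ∈ P.V j' → j < j'

/-- `Φ(Q,Q•) = ∪_j Φ^j`. -/
def DSP.Roots {Q : Quiv n} {ℓ : ℕ} (P : DSP Q ℓ) : Set (Fin n → ℕ) :=
  ⋃ j, Q.PosRootsOn (P.V j) (P.A j)

/-- An allowed total order `φ₁ ≺ ⋯ ≺ φ_r` on `Φ(Q,Q•)`: an enumeration such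
that for `u < v`, `λ(φ_u,φ_v) ≥ 0` if `φ_u, φ_v` lie in the same `Φ^j` and
`λ(φ_u,φ_v) ≤ 0` if they lie in different `Φ^j`'s. -/
def DSP.AllowedOrder {Q : Quiv n} {ℓ : ℕ} (P : DSP Q ℓ) {r : ℕ}
    (φ : Fin r → (Fin n → ℕ)) : Prop :=
  Function.Injective φ ∧ Set.range φ = P.Roots ∧
    ∀ u v : Fin r, u < v →
      ((∃ j, φ u ∈ Q.PosRootsOn (P.V j) (P.A j) ∧
          φ v ∈ Q.PosRootsOn (P.V j) (P.A j)) →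
        0 ≤ Q.lam (toZ (φ u)) (toZ (φ v))) ∧
      ((¬ ∃ j, φ u ∈ Q.PosRootsOn (P.V j) (P.A j) ∧
          φ v ∈ Q.PosRootsOn (P.V j) (P.A j)) →
        Q.lam (toZ (φ u)) (toZ (φ v)) ≤ 0)

end Quiv

noncomputable section

open Quiv

/-- The underlying vector space of the completed quantum algebra `Â_Q`:
functions from dimension vectors to `ℚ(t)`. -/
abbrev AQ (n : ℕ) := (Fin n → ℕ) → RatFunc ℚ

/-- The variable `t = q^{1/2}` of `ℚ(t)`. -/
def tq : RatFunc ℚ := RatFunc.X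

/-- The unit of `Â_Q`: the indicator function of the zero dimension vector. -/
def oneQ {n : ℕ} : AQ n := fun γ => if γ = 0 then 1 else 0

/-- The generator `y_γ = −δ_γ` of the quantum algebra. -/
def yQ {n : ℕ} (γ : Fin n → ℕ) : AQ n := fun δ => if δ = γ then -1 else 0

/-- The twisted convolution product of the quantum algebra:
`(f·g)(γ) = Σ_{γ₁+γ₂=γ} t^{λ(γ₁,γ₂)} f(γ₁) g(γ₂)`. -/
def mulQ {n : ℕ} (Q : Quiv n) (f g : AQ n) : AQ n := fun γ =>
  ∑ γ₁ ∈ Finset.Iic γ,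
    tq ^ (Q.lam (toZ γ₁) (toZ (γ - γ₁))) * f γ₁ * g (γ - γ₁)

/-- Ordered product of a list of elements of `Â_Q`. -/
def prodQ {n : ℕ} (Q : Quiv n) (L : List (AQ n)) : AQ n := L.foldr (mulQ Q) oneQ

/-- Power in the quantum algebra. -/
def powQ {n : ℕ} (Q : Quiv n) (f : AQ n) : ℕ → AQ n
  | 0 => oneQ
  | k + 1 => mulQ Q f (powQ Q f k)

/-- `P_k = Π_{j=1}^k (1 − q^j)⁻¹` with `q = t²`, the Poincaré series of
`H^*(BGL(k,ℂ))`. -/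
def Pq (k : ℕ) : RatFunc ℚ := ∏ j ∈ Finset.Icc 1 k, (1 - tq ^ (2 * j))⁻¹

/-- The quantum dilogarithm `E(y_γ) = 1 + Σ_{k≥1} (−1)^k t^{k²} P_k y_γ^k`,
written out as the function supported on the multiples `k • γ`,
with value `t^{k²} P_k` at `k • γ`  (note `y_γ^k = (−1)^k δ_{kγ}`). -/
def Edl {n : ℕ} (γ : Fin n → ℕ) : AQ n := fun δ =>
  ∑ k ∈ Finset.range ((∑ i, δ i) + 1),
    if δ = k • γ then tq ^ (k ^ 2) * Pq k else 0

end

/-- The `A₂` quiver `1 ← 2` (vertices `0,1` of `Fin 2`): one arrow `2 → 1`. -/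
def QA2 : Quiv 2 := ⟨1, ![1], ![0]⟩

/-! At a dimension vector `(a, b)` only one term of the convolution `E(y_{e₁}) E(y_{e₂})` survives,
namely `t^{a² + b² - ab} P_a P_b`, while the coefficient of `E(y_{e₂}) E(y_{e₁+e₂}) E(y_{e₁})` is a
sum over `m ≤ min a b` of the terms `t^{a² + b² - ab} q^{(a-m)(b-m)} P_m P_{a-m} P_{b-m}`.
So the pentagon identity is the `q`-series identity
`P_a P_b = ∑_{m ≤ min a b} q^{(a-m)(b-m)} P_m P_{a-m} P_{b-m}`, where `P_k = 1 / (q; q)_k`. -/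

open Finset

section QPochhammer

variable {K : Type*} [Field K]

def invQPoch (q : K) (k : ℕ) : K := ∏ j ∈ Icc 1 k, (1 - q ^ j)⁻¹

theorem invQPoch_zero (q : K) : invQPoch q 0 = 1 := by simp [invQPoch]

theorem invQPoch_succ (q : K) (k : ℕ) :
    invQPoch q (k + 1) = invQPoch q k * (1 - q ^ (k + 1))⁻¹ :=
  prod_Icc_succ_top (by omega) _

theorem one_sub_pow_mul_invQPoch_succ {q : K} (hq : ∀ k, q ^ (k + 1) ≠ 1) (k : ℕ) :
    (1 - q ^ (k + 1)) * invQPoch q (k + 1) = invQPoch q k := by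
  rw [invQPoch_succ, mul_left_comm, mul_inv_cancel₀ (sub_ne_zero.2 (hq k).symm), mul_one]

theorem sum_antidiagonal_invQPoch {q : K} (hq : ∀ k, q ^ (k + 1) ≠ 1) (b d : ℕ) :
    ∑ p ∈ antidiagonal b,
        q ^ ((p.2 + d) * p.2) * (invQPoch q p.1 * invQPoch q (p.2 + d) * invQPoch q p.2) =
      invQPoch q (b + d) * invQPoch q b := by
  induction b generalizing d with
  | zero => simp [invQPoch_zero]
  | succ b ih =>
    have hP := one_sub_pow_mul_invQPoch_succ hq
    set P := invQPoch q
    set T : ℕ → ℕ × ℕ → K := fun d p => q ^ ((p.2 + d) * p.2) * (P p.1 * P (p.2 + d) * P p.2)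
    -- `1 - q ^ (m + j) = (1 - q ^ m) + q ^ m * (1 - q ^ j)` splits each term into a term with
    -- smaller `m` and a term with smaller `j`.
    have lower_fst : ∑ p ∈ antidiagonal (b + 1), (1 - q ^ p.1) * T d p = P (b + d) * P b := by
      rw [Nat.sum_antidiagonal_succ, ← ih]
      simp only [T, pow_zero, sub_self, zero_mul, zero_add]
      refine sum_congr rfl fun p _ => ?_
      rw [← hP p.1]
      ring
    have lower_snd : ∑ p ∈ antidiagonal (b + 1), q ^ p.1 * (1 - q ^ p.2) * T d p =
        q ^ (b + d + 1) * (P (b + (d + 1)) * P b) := by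
      rw [Nat.sum_antidiagonal_succ', ← ih, mul_sum]
      simp only [T, pow_zero, sub_self, mul_zero, zero_mul, zero_add]
      refine sum_congr rfl fun p hp => ?_
      rw [← mem_antidiagonal.1 hp, ← hP p.2, show p.2 + 1 + d = p.2 + (d + 1) by ring]
      ring
    refine mul_left_cancel₀ (sub_ne_zero.2 (hq b).symm) ?_
    calc (1 - q ^ (b + 1)) * ∑ p ∈ antidiagonal (b + 1), T d p
        = ∑ p ∈ antidiagonal (b + 1),
            ((1 - q ^ p.1) * T d p + q ^ p.1 * (1 - q ^ p.2) * T d p) := by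
          rw [mul_sum]
          refine sum_congr rfl fun p hp => ?_
          rw [← mem_antidiagonal.1 hp]
          ring
      _ = P (b + d) * P b + q ^ (b + d + 1) * (P (b + (d + 1)) * P b) := by
          rw [sum_add_distrib, lower_fst, lower_snd]
      _ = (1 - q ^ (b + 1)) * (P (b + 1 + d) * P (b + 1)) := by
          rw [show b + 1 + d = b + d + 1 by ring, mul_left_comm (1 - q ^ (b + 1)), hP b,
            ← hP (b + d), show b + (d + 1) = b + d + 1 by ring]
          ring

theorem sum_range_min_invQPoch {q : K} (hq : ∀ k, q ^ (k + 1) ≠ 1) (a b : ℕ) :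
    ∑ m ∈ range (min a b + 1),
        q ^ ((a - m) * (b - m)) * (invQPoch q m * invQPoch q (a - m) * invQPoch q (b - m)) =
      invQPoch q a * invQPoch q b := by
  wlog hba : b ≤ a generalizing a b
  · rw [min_comm, mul_comm (invQPoch q a), ← this b a (by omega)]
    refine sum_congr rfl fun m _ => ?_
    ring
  obtain ⟨d, rfl⟩ := Nat.exists_eq_add_of_le hba
  rw [min_eq_right hba, ← sum_antidiagonal_invQPoch hq b d,
    Nat.sum_antidiagonal_eq_sum_range_succ_mk]
  refine sum_congr rfl fun m hm => ?_
  have hmb : m ≤ b := Nat.lt_succ_iff.1 (mem_range.1 hm)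
  rw [show b + d - m = b - m + d by omega]

end QPochhammer

theorem sum_antidiagonal_ite_fst_eq {M : Type*} [AddCommMonoid M] (n m : ℕ) (f : ℕ × ℕ → M) :
    ∑ p ∈ antidiagonal n, (if p.1 = m then f p else 0) = if m ≤ n then f (m, n - m) else 0 := by
  rw [← sum_filter, HasAntidiagonal.filter_fst_eq_antidiagonal n m]
  split_ifs <;> simp

theorem sum_antidiagonal_ite_snd_eq {M : Type*} [AddCommMonoid M] (n m : ℕ) (f : ℕ × ℕ → M) :
    ∑ p ∈ antidiagonal n, (if p.2 = m then f p else 0) = if m ≤ n then f (n - m, m) else 0 := by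
  rw [← sum_filter, HasAntidiagonal.filter_snd_eq_antidiagonal n m]
  split_ifs <;> simp

theorem mulQ_oneQ {n : ℕ} (Q : Quiv n) (f : AQ n) : mulQ Q f oneQ = f := by
  funext γ
  rw [mulQ, sum_eq_single_of_mem γ (mem_Iic.2 le_rfl)]
  · have hlam : Q.lam (Quiv.toZ γ) (Quiv.toZ 0) = 0 := by
      simp [Quiv.lam, Quiv.chi, Quiv.chiSub, Quiv.toZ]
    simp [oneQ, hlam]
  · intro γ₁ hγ₁ hne
    have : γ - γ₁ ≠ 0 := fun h => hne (le_antisymm (mem_Iic.1 hγ₁) (tsub_eq_zero_iff_le.1 h))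
    simp [oneQ, this]

theorem Edl_smul_apply {n : ℕ} {γ : Fin n → ℕ} (hγ : γ ≠ 0) (k : ℕ) :
    Edl γ (k • γ) = tq ^ (k ^ 2) * Pq k := by
  obtain ⟨i, hi⟩ := Function.ne_iff.1 hγ
  have hk : k < ∑ i, (k • γ) i + 1 := by
    have : k ≤ (k • γ) i := by simpa using Nat.le_mul_of_pos_right k (Nat.pos_of_ne_zero hi)
    have := single_le_sum (fun j _ => Nat.zero_le ((k • γ) j)) (mem_univ i)
    omega
  have hne : ∀ j ≠ k, k • γ ≠ j • γ := fun j hjk h =>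
    hjk (Nat.eq_of_mul_eq_mul_right (Nat.pos_of_ne_zero hi) (by simpa using congrFun h i)).symm
  rw [Edl, sum_eq_single_of_mem k (mem_range.2 hk) fun j _ hjk => if_neg (hne j hjk), if_pos rfl]

theorem Edl_apply_eq_zero {n : ℕ} {γ δ : Fin n → ℕ} (h : ∀ k : ℕ, k • γ ≠ δ) : Edl γ δ = 0 :=
  sum_eq_zero fun k _ => if_neg (h k).symm

theorem lam_QA2 (γ₁ γ₂ : Fin 2 → ℤ) : QA2.lam γ₁ γ₂ = γ₁ 1 * γ₂ 0 - γ₁ 0 * γ₂ 1 := by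
  have sum_arrows : ∀ F : Fin QA2.m → ℤ, ∑ a, F a = F ⟨0, Nat.one_pos⟩ := Fin.sum_univ_one
  simp only [Quiv.lam, Quiv.chi, Quiv.chiSub, sum_arrows, Fin.sum_univ_two]
  simp only [QA2, Fin.zero_eta, Matrix.cons_val_fin_one]
  ring

theorem mulQ_QA2_apply (f g : AQ 2) (a b : ℕ) :
    mulQ QA2 f g ![a, b] = ∑ p ∈ antidiagonal a, ∑ r ∈ antidiagonal b,
      tq ^ ((r.1 * p.2 : ℤ) - p.1 * r.2) * f ![p.1, r.1] * g ![p.2, r.2] := by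
  rw [mulQ, ← sum_product']
  refine sum_nbij' (fun γ => ((γ 0, a - γ 0), (γ 1, b - γ 1))) (fun pr => ![pr.1.1, pr.2.1])
    ?_ ?_ (fun γ _ => FinVec.etaExpand_eq γ) ?_ ?_
  · intro γ hγ
    have h0 := mem_Iic.1 hγ 0
    have h1 := mem_Iic.1 hγ 1
    simp_all [HasAntidiagonal.mem_antidiagonal]
  · rintro ⟨⟨i, i'⟩, ⟨j, j'⟩⟩ hpr
    obtain ⟨rfl, rfl⟩ : i + i' = a ∧ j + j' = b := by simpa using hpr
    exact mem_Iic.2 (Fin.forall_fin_two.2 ⟨Nat.le_add_right i i', Nat.le_add_right j j'⟩)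
  · rintro ⟨⟨i, i'⟩, ⟨j, j'⟩⟩ hpr
    obtain ⟨rfl, rfl⟩ : i + i' = a ∧ j + j' = b := by simpa using hpr
    simp
  · intro γ _
    have eta : ![γ 0, γ 1] = γ := FinVec.etaExpand_eq γ
    have hsub : ![a, b] - γ = ![a - γ 0, b - γ 1] := by
      funext i; fin_cases i <;> rfl
    simp [hsub, lam_QA2, eta, Quiv.toZ]

theorem Edl_e1_apply (i j : ℕ) :
    Edl ![1, 0] ![i, j] = if j = 0 then tq ^ (i ^ 2) * Pq i else 0 := by
  split_ifs with hj
  · subst hj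
    simpa using Edl_smul_apply (γ := ![1, 0]) (by simp) i
  · exact Edl_apply_eq_zero fun k hk => hj (by simpa using (congrFun hk 1).symm)

theorem Edl_e2_apply (i j : ℕ) :
    Edl ![0, 1] ![i, j] = if i = 0 then tq ^ (j ^ 2) * Pq j else 0 := by
  split_ifs with hi
  · subst hi
    simpa using Edl_smul_apply (γ := ![0, 1]) (by simp) j
  · exact Edl_apply_eq_zero fun k hk => hi (by simpa using (congrFun hk 0).symm)

theorem Edl_e12_apply (i j : ℕ) :
    Edl ![1, 1] ![i, j] = if i = j then tq ^ (i ^ 2) * Pq i else 0 := by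
  split_ifs with hij
  · subst hij
    simpa using Edl_smul_apply (γ := ![1, 1]) (by simp) i
  · exact Edl_apply_eq_zero fun k hk =>
      hij (by simpa using (congrFun hk 0).symm.trans (congrFun hk 1))

theorem mulQ_Edl_e1_Edl_e2_apply (a b : ℕ) : mulQ QA2 (Edl ![1, 0]) (Edl ![0, 1]) ![a, b] =
    tq ^ (-(a * b : ℤ)) * (tq ^ (a ^ 2) * Pq a * (tq ^ (b ^ 2) * Pq b)) := by
  simp only [mulQ_QA2_apply, Edl_e1_apply, Edl_e2_apply, mul_ite, ite_mul, mul_zero, zero_mul,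
    sum_ite_irrel, sum_const_zero, sum_antidiagonal_ite_fst_eq, sum_antidiagonal_ite_snd_eq]
  simp only [zero_le, ↓reduceIte, CharP.cast_eq_zero, mul_zero, tsub_zero, zero_sub, zpow_neg]
  ring

theorem mulQ_Edl_e12_Edl_e1_apply (a b : ℕ) : mulQ QA2 (Edl ![1, 1]) (Edl ![1, 0]) ![a, b] =
    if b ≤ a then tq ^ (b * (a - b)) * (tq ^ (b ^ 2) * Pq b * (tq ^ ((a - b) ^ 2) * Pq (a - b)))
    else 0 := by
  simp only [mulQ_QA2_apply, Edl_e12_apply, Edl_e1_apply, mul_ite, ite_mul, mul_zero, zero_mul,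
    sum_ite_irrel, sum_const_zero, sum_antidiagonal_ite_fst_eq, sum_antidiagonal_ite_snd_eq]
  simp only [Nat.zero_le, if_true, Nat.sub_zero, Nat.cast_zero, mul_zero, sub_zero]
  congr 1
  rw [mul_assoc, ← Nat.cast_mul, zpow_natCast]

theorem mulQ_Edl_e2_apply (g : AQ 2) (a b : ℕ) : mulQ QA2 (Edl ![0, 1]) g ![a, b] =
    ∑ r ∈ antidiagonal b, tq ^ (r.1 * a) * (tq ^ (r.1 ^ 2) * Pq r.1) * g ![a, r.2] := by
  simp only [mulQ_QA2_apply, Edl_e2_apply, mul_ite, ite_mul, mul_zero, zero_mul,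
    sum_ite_irrel, sum_const_zero, sum_antidiagonal_ite_fst_eq]
  simp [← zpow_natCast]

theorem tq_sq_pow_succ_ne_one (k : ℕ) : (tq ^ 2) ^ (k + 1) ≠ 1 := by
  rw [← pow_mul, tq, ← RatFunc.algebraMap_X, ← map_pow,
    ← map_one (algebraMap (Polynomial ℚ) (RatFunc ℚ)), (RatFunc.algebraMap_injective ℚ).ne_iff]
  intro h
  simpa using congrArg Polynomial.natDegree h

theorem Pq_eq_invQPoch (k : ℕ) : Pq k = invQPoch (tq ^ 2) k := by
  simp only [Pq, invQPoch, pow_mul]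

theorem mulQ_Edl_e2_mulQ_Edl_e12_Edl_e1_apply (a b : ℕ) :
    mulQ QA2 (Edl ![0, 1]) (mulQ QA2 (Edl ![1, 1]) (Edl ![1, 0])) ![a, b] =
      ∑ m ∈ range (min a b + 1), tq ^ ((b - m) * a) * (tq ^ ((b - m) ^ 2) * Pq (b - m)) *
        (tq ^ (m * (a - m)) * (tq ^ (m ^ 2) * Pq m * (tq ^ ((a - m) ^ 2) * Pq (a - m)))) := by
  rw [mulQ_Edl_e2_apply, ← Nat.sum_antidiagonal_swap]
  simp only [Prod.fst_swap, Prod.snd_swap, mulQ_Edl_e12_Edl_e1_apply, mul_ite, mul_zero]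
  rw [Nat.sum_antidiagonal_eq_sum_range_succ_mk, ← sum_filter]
  congr 1
  ext m
  simp only [mem_filter, mem_range]
  omega

theorem pentagon_apply (a b : ℕ) :
    mulQ QA2 (Edl ![1, 0]) (Edl ![0, 1]) ![a, b] =
      mulQ QA2 (Edl ![0, 1]) (mulQ QA2 (Edl ![1, 1]) (Edl ![1, 0])) ![a, b] := by
  rw [mulQ_Edl_e1_Edl_e2_apply, mulQ_Edl_e2_mulQ_Edl_e12_Edl_e1_apply]
  have hterm : ∀ m ∈ range (min a b + 1),
      tq ^ ((b - m) * a) * (tq ^ ((b - m) ^ 2) * Pq (b - m)) *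
        (tq ^ (m * (a - m)) * (tq ^ (m ^ 2) * Pq m * (tq ^ ((a - m) ^ 2) * Pq (a - m)))) =
      tq ^ (-(a * b : ℤ)) * (tq ^ (a ^ 2) * tq ^ (b ^ 2)) *
        ((tq ^ 2) ^ ((a - m) * (b - m)) * (Pq m * Pq (a - m) * Pq (b - m))) := by
    intro m hm
    have hm := mem_range.1 hm
    obtain ⟨i, rfl⟩ : ∃ i, a = m + i := Nat.exists_eq_add_of_le (by omega)
    obtain ⟨j, rfl⟩ : ∃ j, b = m + j := Nat.exists_eq_add_of_le (by omega)
    have htq : tq ≠ 0 := RatFunc.X_ne_zero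
    simp only [Nat.add_sub_cancel_left, ← Nat.cast_mul, zpow_neg, zpow_natCast]
    field_simp
    ring
  rw [sum_congr rfl hterm, ← mul_sum]
  simp only [Pq_eq_invQPoch]
  rw [sum_range_min_invQPoch tq_sq_pow_succ_ne_one]
  ring

/-- pentagon identity: In `Â_Q` for the `A₂` quiver `1 ← 2`,
`E(y_{e₁})E(y_{e₂}) = E(y_{e₂})E(y_{e₁+e₂})E(y_{e₁})`. -/
theorem statement11 :
    prodQ QA2 [Edl ![1, 0], Edl ![0, 1]] =
      prodQ QA2 [Edl ![0, 1], Edl ![1, 1], Edl ![1, 0]] := by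
  simp only [prodQ, List.foldr, mulQ_oneQ]
  funext γ
  obtain ⟨a, b, rfl⟩ : ∃ a b, γ = ![a, b] := ⟨γ 0, γ 1, (FinVec.etaExpand_eq γ).symm⟩
  exact pentagon_apply a b
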